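/- For every ALCI-concept C, abstraction level L, and ALCHI^abs[cr,rr]-ontology O: C is L-satisfiable with respect to O if and only if C is L-satisfiable with respect to O under the repetition-free semantics. -/

import Mathlib

set_option maxHeartbeats 1000000

namespace DLAbs

/-! # Basic syntax of description logics with abstraction and refinement

Concept names, role names, variables and abstraction levels are represented
by natural numbers. -/

/-- A role: a role name or an inverse role. -/
inductive Role where
  | name (r : ℕ)
  | inv  (r : ℕ)
deriving DecidableEq

/-- `R⁻`, with `(r⁻)⁻ = r`. -/
def Role.flip : Role → Role
  | .name r => .inv r
  | .inv r  => .name r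

/-- The underlying role name of a role. -/
def Role.base : Role → ℕ
  | .name r => r
  | .inv r  => r

/-- A role is a plain role name (no inverse). -/
def Role.IsName : Role → Prop
  | .name _ => True
  | .inv _  => False

/-- ALCI-concepts. -/
inductive Concept where
  | atom (A : ℕ)
  | neg  (C : Concept)
  | conj (C D : Concept)
  | disj (C D : Concept)
  | ex   (R : Role) (C : Concept)
  | all  (R : Role) (C : Concept)
deriving DecidableEq

/-- `⊤` is an abbreviation for `A ⊔ ¬A` with `A` a fixed concept name. -/
def Concept.top : Concept := .disj (.atom 0) (.neg (.atom 0))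

/-- `⊥` is an abbreviation for `¬⊤`. -/
def Concept.bot : Concept := .neg Concept.top

/-- ALC-concepts: no inverse roles. -/
def Concept.IsALC : Concept → Prop
  | .atom _ => True
  | .neg C => C.IsALC
  | .conj C D => C.IsALC ∧ D.IsALC
  | .disj C D => C.IsALC ∧ D.IsALC
  | .ex R C => R.IsName ∧ C.IsALC
  | .all R C => R.IsName ∧ C.IsALC

/-- EL-concepts: only concept names, `⊓` and `∃r.C` (no inverse roles). -/
def Concept.IsEL : Concept → Prop
  | .atom _ => True
  | .neg _ => False
  | .conj C D => C.IsEL ∧ D.IsEL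
  | .disj _ _ => False
  | .ex R C => R.IsName ∧ C.IsEL
  | .all _ _ => False

/-- Concept names occurring in a concept. -/
def Concept.cnames : Concept → List ℕ
  | .atom A => [A]
  | .neg C => C.cnames
  | .conj C D => C.cnames ++ D.cnames
  | .disj C D => C.cnames ++ D.cnames
  | .ex _ C => C.cnames
  | .all _ C => C.cnames

/-- Role names occurring in a concept. -/
def Concept.rnames : Concept → List ℕ
  | .atom _ => []
  | .neg C => C.rnames
  | .conj C D => C.rnames ++ D.rnames
  | .disj C D => C.rnames ++ D.rnames
  | .ex R C => R.base :: C.rnames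
  | .all R C => R.base :: C.rnames

/-- Size of a concept. -/
def Concept.size : Concept → ℕ
  | .atom _ => 1
  | .neg C => C.size + 1
  | .conj C D => C.size + D.size + 1
  | .disj C D => C.size + D.size + 1
  | .ex _ C => C.size + 2
  | .all _ C => C.size + 2

/-- An interpretation with domain contained in the carrier type `α`.
(Nonemptiness of the domain is required separately where appropriate.) -/
structure Interp (α : Type) where
  dom : Set α
  cname : ℕ → Set α
  rname : ℕ → Set (α × α)
  cname_sub : ∀ A, cname A ⊆ dom
  rname_sub : ∀ r p, p ∈ rname r → p.1 ∈ dom ∧ p.2 ∈ dom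

/-- Interpretation of a (possibly inverse) role. -/
def Interp.role {α} (I : Interp α) : Role → Set (α × α)
  | .name r => I.rname r
  | .inv r  => {p | (p.2, p.1) ∈ I.rname r}

/-- Semantics of concepts. -/
def Interp.sem {α} (I : Interp α) : Concept → Set α
  | .atom A => I.cname A
  | .neg C => I.dom \ I.sem C
  | .conj C D => I.sem C ∩ I.sem D
  | .disj C D => I.sem C ∪ I.sem D
  | .ex R C => {d | d ∈ I.dom ∧ ∃ e, (d, e) ∈ I.role R ∧ e ∈ I.sem C}
  | .all R C => {d | d ∈ I.dom ∧ ∀ e, (d, e) ∈ I.role R → e ∈ I.sem C}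

/-- A conjunctive query: concept atoms `C(x)`, role atoms `r(x,y)` (`r` a role
name), and a tuple of answer variables.  Variables not occurring in `ans` are
existentially quantified. -/
structure CQ where
  cas : List (Concept × ℕ)
  ras : List (ℕ × ℕ × ℕ)
  ans : List ℕ
deriving DecidableEq

/-- The variables occurring in atoms of a CQ. -/
def CQ.atomVars (q : CQ) : List ℕ :=
  q.cas.map Prod.snd ++ q.ras.flatMap (fun p => [p.2.1, p.2.2])

/-- All variables of a CQ. -/
def CQ.vars (q : CQ) : List ℕ := q.ans ++ q.atomVars

/-- A CQ is full if it has no quantified variables. -/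
def CQ.Full (q : CQ) : Prop := (∀ v ∈ q.atomVars, v ∈ q.ans) ∧ q.ans.Nodup

/-- The undirected edge relation on variables induced by the role atoms. -/
def CQ.edge (q : CQ) (a b : ℕ) : Prop :=
  ∃ p ∈ q.ras, (p.2.1 = a ∧ p.2.2 = b) ∨ (p.2.1 = b ∧ p.2.2 = a)

/-- A CQ is connected. -/
def CQ.Connected (q : CQ) : Prop :=
  ∀ u ∈ q.vars, ∀ v ∈ q.vars, Relation.ReflTransGen q.edge u v

/-- `h` is a homomorphism from `q` to `I`. -/
def CQ.Hom {α} (q : CQ) (I : Interp α) (h : ℕ → α) : Prop :=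
  (∀ v ∈ q.vars, h v ∈ I.dom) ∧
  (∀ p ∈ q.cas, h p.2 ∈ I.sem p.1) ∧
  (∀ p ∈ q.ras, (h p.2.1, h p.2.2) ∈ I.rname p.1)

/-- The answers `q(I)` to `q` on `I`, as tuples (lists) indexed by `q.ans`. -/
def CQ.answers {α} (q : CQ) (I : Interp α) : Set (List α) :=
  {t | ∃ h, q.Hom I h ∧ t = q.ans.map h}

def CQ.cnames (q : CQ) : List ℕ := q.cas.flatMap (fun p => p.1.cnames)

def CQ.rnames (q : CQ) : List ℕ :=
  q.cas.flatMap (fun p => p.1.rnames) ++ q.ras.map (fun p => p.1)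

def CQ.size (q : CQ) : ℕ :=
  (q.cas.map (fun p => p.1.size + 1)).sum + 3 * q.ras.length + q.ans.length + 1

/-- Statements of abstraction DLs.
* `ci L C D`: the labeled concept inclusion `C ⊑_L D`;
* `ri L R S`: the labeled role inclusion `R ⊑_L S`;
* `cref L q L' C`: the concept refinement `L:q(x̄) refines L':C`;
* `cabs L' C L q`: the concept abstraction `L':C abstracts L:q(x̄)`;
* `rref L q nx L' C1 R C2`: the role refinement
  `L:q(x̄,ȳ) refines L':(C1(x) ∧ R(x,y) ∧ C2(y))`, where `x̄` consists of the
  first `nx` answer variables of `q` and `ȳ` of the remaining ones;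
* `rabs L' R L q nx`: the role abstraction `L':R abstracts L:q(x̄,ȳ)`, with the
  same convention for the split of the answer variables. -/
inductive Stmt where
  | ci   (L : ℕ) (C D : Concept)
  | ri   (L : ℕ) (R S : Role)
  | cref (L : ℕ) (q : CQ) (L' : ℕ) (C : Concept)
  | cabs (L' : ℕ) (C : Concept) (L : ℕ) (q : CQ)
  | rref (L : ℕ) (q : CQ) (nx : ℕ) (L' : ℕ) (C1 : Concept) (R : Role) (C2 : Concept)
  | rabs (L' : ℕ) (R : Role) (L : ℕ) (q : CQ) (nx : ℕ)
deriving DecidableEq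

/-- Syntactic side conditions on the CQs in a statement: CQs in refinement and
abstraction statements are full, CQs in abstraction statements are moreover
connected, and in role refinements/abstractions both tuples are nonempty. -/
def Stmt.WfCQ : Stmt → Prop
  | .ci _ _ _ => True
  | .ri _ _ _ => True
  | .cref _ q _ _ => q.Full
  | .cabs _ _ _ q => q.Full ∧ q.Connected
  | .rref _ q nx _ _ _ _ => q.Full ∧ 0 < nx ∧ nx < q.ans.length
  | .rabs _ _ _ q nx => q.Full ∧ q.Connected ∧ 0 < nx ∧ nx < q.ans.length

def Stmt.lvls : Stmt → List ℕ
  | .ci L _ _ => [L]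
  | .ri L _ _ => [L]
  | .cref L _ L' _ => [L, L']
  | .cabs L' _ L _ => [L, L']
  | .rref L _ _ L' _ _ _ => [L, L']
  | .rabs L' _ L _ _ => [L, L']

def Stmt.cnames : Stmt → List ℕ
  | .ci _ C D => C.cnames ++ D.cnames
  | .ri _ _ _ => []
  | .cref _ q _ C => q.cnames ++ C.cnames
  | .cabs _ C _ q => q.cnames ++ C.cnames
  | .rref _ q _ _ C1 _ C2 => q.cnames ++ C1.cnames ++ C2.cnames
  | .rabs _ _ _ q _ => q.cnames

def Stmt.rnames : Stmt → List ℕ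
  | .ci _ C D => C.rnames ++ D.rnames
  | .ri _ R S => [R.base, S.base]
  | .cref _ q _ C => q.rnames ++ C.rnames
  | .cabs _ C _ q => q.rnames ++ C.rnames
  | .rref _ q _ _ C1 R C2 => q.rnames ++ C1.rnames ++ C2.rnames ++ [R.base]
  | .rabs _ R _ q _ => q.rnames ++ [R.base]

def Stmt.size : Stmt → ℕ
  | .ci _ C D => C.size + D.size + 2
  | .ri _ _ _ => 4
  | .cref _ q _ C => q.size + C.size + 2
  | .cabs _ C _ q => q.size + C.size + 2
  | .rref _ q _ _ C1 _ C2 => q.size + C1.size + C2.size + 6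
  | .rabs _ _ _ q _ => q.size + 6

/-- The abstraction levels occurring in an ontology. -/
def ontLvls (O : List Stmt) : List ℕ := O.flatMap Stmt.lvls

/-- The concept names occurring in an ontology. -/
def ontCnames (O : List Stmt) : List ℕ := O.flatMap Stmt.cnames

/-- The role names occurring in an ontology. -/
def ontRnames (O : List Stmt) : List ℕ := O.flatMap Stmt.rnames

/-- The size `‖O‖` of an ontology. -/
def ontSize (O : List Stmt) : ℕ := (O.map Stmt.size).sum + 1

/-- An A-interpretation: a set of abstraction levels, a relation `≺` on them,
one interpretation per level, and a partial refinement function `ρ`.  The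
structural requirements are collected in `AInterp.Wf`, `AInterp.IsValid` and
`AInterp.IsValidDAG` below. -/
structure AInterp (α : Type) where
  levels : Set ℕ
  prec : ℕ → ℕ → Prop
  interp : ℕ → Interp α
  rho : α → ℕ → Option (List α)

/-- The directed graph `(V, E)` is a tree. -/
def IsTreeGraph (V : Set ℕ) (E : ℕ → ℕ → Prop) : Prop :=
  ∃ root ∈ V, (∀ u, ¬ E u root) ∧
    (∀ v ∈ V, v ≠ root → ∃! u, u ∈ V ∧ E u v) ∧
    (∀ v ∈ V, Relation.ReflTransGen (fun a b => a ∈ V ∧ b ∈ V ∧ E a b) root v)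

/-- The directed graph `(V, E)` is a DAG. -/
def IsDAGGraph (V : Set ℕ) (E : ℕ → ℕ → Prop) : Prop :=
  (∀ a b, E a b → a ∈ V ∧ b ∈ V) ∧ (∀ v, ¬ Relation.TransGen E v v)

/-- Structural conditions on A-interpretations (without the condition on the
shape of the level graph): levels carry nonempty pairwise disjoint domains,
`≺` relates only levels of the interpretation, and the refinement function
assigns to `(d, L)` with `L ≺ L(d)` nonempty tuples over `Δ^{I_L}` such that
every element participates in at most one ensemble of its own level. -/
def AInterp.Wf {α} (I : AInterp α) : Prop :=
  (∀ L ∈ I.levels, (I.interp L).dom.Nonempty) ∧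
  (∀ L, L ∉ I.levels → (I.interp L).dom = ∅) ∧
  (∀ L L', L ≠ L' → ∀ d, d ∈ (I.interp L).dom → d ∉ (I.interp L').dom) ∧
  (∀ L L', I.prec L L' → L ∈ I.levels ∧ L' ∈ I.levels) ∧
  (∀ d L t, I.rho d L = some t →
      t ≠ [] ∧ (∀ e ∈ t, e ∈ (I.interp L).dom) ∧
      ∃ L', d ∈ (I.interp L').dom ∧ I.prec L L') ∧
  (∀ L d d' t t', I.rho d L = some t → I.rho d' L = some t' →
      ∀ e, e ∈ t → e ∈ t' → d = d')

/-- A valid A-interpretation: the level graph `(A_I, {(L',L) | L ≺ L'})` is a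
tree. -/
def AInterp.IsValid {α} (I : AInterp α) : Prop :=
  I.Wf ∧ IsTreeGraph I.levels (fun a b => I.prec b a)

/-- A-interpretations under the DAG semantics: the level graph is only
required to be a directed acyclic graph. -/
def AInterp.IsValidDAG {α} (I : AInterp α) : Prop :=
  I.Wf ∧ IsDAGGraph I.levels (fun a b => I.prec b a)

/-- The repetition-free semantics: every ensemble is a repetition-free
tuple. -/
def AInterp.RepFree {α} (I : AInterp α) : Prop :=
  ∀ d L t, I.rho d L = some t → t.Nodup

/-- Satisfaction of statements in an A-interpretation. -/
def AInterp.sat {α} (I : AInterp α) : Stmt → Prop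
  | .ci L C D => L ∈ I.levels ∧ (I.interp L).sem C ⊆ (I.interp L).sem D
  | .ri L R S => L ∈ I.levels ∧ (I.interp L).role R ⊆ (I.interp L).role S
  | .cref L q L' C => I.prec L L' ∧
      ∀ d ∈ (I.interp L').sem C, ∃ t ∈ q.answers (I.interp L), I.rho d L = some t
  | .cabs L' C L q => I.prec L L' ∧
      ∀ t ∈ q.answers (I.interp L), ∃ d ∈ (I.interp L').sem C, I.rho d L = some t
  | .rref L q nx L' C1 R C2 => I.prec L L' ∧
      ∀ d1 d2, d1 ∈ (I.interp L').sem C1 → d2 ∈ (I.interp L').sem C2 →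
        (d1, d2) ∈ (I.interp L').role R →
        ∃ h, q.Hom (I.interp L) h ∧
          I.rho d1 L = some ((q.ans.take nx).map h) ∧
          I.rho d2 L = some ((q.ans.drop nx).map h)
  | .rabs L' R L q nx => I.prec L L' ∧
      ∀ h, q.Hom (I.interp L) h →
        ∃ d1 d2, (d1, d2) ∈ (I.interp L').role R ∧
          I.rho d1 L = some ((q.ans.take nx).map h) ∧
          I.rho d2 L = some ((q.ans.drop nx).map h)

/-- `C` is `L`-satisfiable w.r.t. the ontology `O` (given as a set of
statements). -/
def SatSet (O : Set Stmt) (C : Concept) (L : ℕ) : Prop :=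
  ∃ (α : Type) (I : AInterp α), I.IsValid ∧ (∀ s ∈ O, I.sat s) ∧
    ((I.interp L).sem C).Nonempty

/-- `L`-satisfiability under the repetition-free semantics. -/
def SatSetRF (O : Set Stmt) (C : Concept) (L : ℕ) : Prop :=
  ∃ (α : Type) (I : AInterp α), I.IsValid ∧ I.RepFree ∧ (∀ s ∈ O, I.sat s) ∧
    ((I.interp L).sem C).Nonempty

/-- `L`-satisfiability under the DAG semantics. -/
def SatSetDAG (O : Set Stmt) (C : Concept) (L : ℕ) : Prop :=
  ∃ (α : Type) (I : AInterp α), I.IsValidDAG ∧ (∀ s ∈ O, I.sat s) ∧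
    ((I.interp L).sem C).Nonempty

def SatList (O : List Stmt) (C : Concept) (L : ℕ) : Prop :=
  SatSet {s | s ∈ O} C L

def SatListRF (O : List Stmt) (C : Concept) (L : ℕ) : Prop :=
  SatSetRF {s | s ∈ O} C L

def SatListDAG (O : List Stmt) (C : Concept) (L : ℕ) : Prop :=
  SatSetDAG {s | s ∈ O} C L

/-! ## Ordinary (one-level) ontologies -/

/-- An ordinary ontology is a finite list of concept inclusions `C ⊑ D`. -/
def Interp.IsPlainModel {α} (I : Interp α) (O : List (Concept × Concept)) : Prop :=
  I.dom.Nonempty ∧ ∀ p ∈ O, I.sem p.1 ⊆ I.sem p.2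

/-- `O, A ⊨ q`: every model of `O` in which the concept name `A` is nonempty
satisfies the Boolean CQ `q`. -/
def EntailsCQ (O : List (Concept × Concept)) (A : ℕ) (q : CQ) : Prop :=
  ∀ (α : Type) (I : Interp α), I.IsPlainModel O → (I.cname A).Nonempty →
    ∃ h, q.Hom I h

def plainCnames (O : List (Concept × Concept)) : List ℕ :=
  O.flatMap (fun p => p.1.cnames ++ p.2.cnames)

def plainRnames (O : List (Concept × Concept)) : List ℕ :=
  O.flatMap (fun p => p.1.rnames ++ p.2.rnames)

def bigConj (l : List Concept) : Concept := l.foldr Concept.conj Concept.top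

def bigDisj (l : List Concept) : Concept := l.foldr Concept.disj Concept.bot

/-- `O` is an `ALCHI^abs[cr,rr]`-ontology: labeled concept and role
inclusions, concept refinements and role refinements, with full CQs. -/
def IsALCHIabsCRRR (O : List Stmt) : Prop :=
  ∀ s ∈ O, s.WfCQ ∧ match s with
    | .ci _ _ _ => True
    | .ri _ _ _ => True
    | .cref _ _ _ _ => True
    | .rref _ _ _ _ _ _ _ => True
    | _ => False

/-! ## Auxiliary material for the repetition-free model construction -/

section RFAux

variable {α : Type}

/-- Disambiguation of a tuple using copy index `i`: position `k` gets tag `Nat.pair i k`. -/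
def disamb (i : ℕ) (t : List α) : List (α × ℕ) :=
  t.mapIdx fun k e => (e, Nat.pair i k)

@[simp] lemma disamb_length (i : ℕ) (t : List α) : (disamb i t).length = t.length := by
  simp [disamb]

lemma mem_disamb {i : ℕ} {t : List α} {p : α × ℕ} (hp : p ∈ disamb i t) :
    ∃ k, ∃ hk : k < t.length, p = (t[k], Nat.pair i k) := by
  rw [List.mem_iff_getElem] at hp
  obtain ⟨k, hk, hpk⟩ := hp
  have hk' : k < t.length := by simpa using hk
  exact ⟨k, hk', by rw [← hpk]; simp [disamb]⟩

lemma disamb_nodup (i : ℕ) (t : List α) : (disamb i t).Nodup := by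
  apply List.Nodup.of_map Prod.snd
  have : (disamb i t).map Prod.snd = (List.range t.length).map (Nat.pair i) := by
    apply List.ext_getElem (by simp)
    intro n h1 h2
    simp [disamb, Nat.pair_eq_pair]
  rw [this]
  exact (List.nodup_range).map (fun a b hab => (Nat.pair_eq_pair.mp hab).2)

lemma map_eq_disamb {l : List ℕ} (hl : l.Nodup) (h : ℕ → α) (i : ℕ) (h' : ℕ → α × ℕ)
    (hh' : ∀ v ∈ l, h' v = (h v, Nat.pair i (l.idxOf v))) :
    l.map h' = disamb i (l.map h) := by
  apply List.ext_getElem (by simp)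
  intro n h1 h2
  have hn : n < l.length := by simpa using h1
  have := hh' l[n] (l.getElem_mem hn)
  simp only [List.getElem_map, disamb, List.getElem_mapIdx]
  rw [this, List.Nodup.idxOf_getElem hl n hn]

/-- Lift an interpretation to the product with `ℕ` (countably many copies of each element). -/
def liftI (I : Interp α) : Interp (α × ℕ) where
  dom := {p | p.1 ∈ I.dom}
  cname A := {p | p.1 ∈ I.cname A}
  rname r := {p | (p.1.1, p.2.1) ∈ I.rname r}
  cname_sub A p hp := I.cname_sub A hp
  rname_sub r p hp := I.rname_sub r _ hp

lemma liftI_role (I : Interp α) (R : Role) :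
    (liftI I).role R = {p | (p.1.1, p.2.1) ∈ I.role R} := by
  cases R <;> rfl

lemma liftI_sem (I : Interp α) (C : Concept) :
    (liftI I).sem C = {p | p.1 ∈ I.sem C} := by
  induction C with
  | atom A => rfl
  | neg C ih =>
      ext p
      simp only [Interp.sem, Set.mem_diff, ih, Set.mem_setOf_eq]
      exact Iff.rfl
  | conj C D ihC ihD => ext p; simp [Interp.sem, ihC, ihD]
  | disj C D ihC ihD => ext p; simp [Interp.sem, ihC, ihD]
  | ex R C ih =>
      ext p
      simp only [Interp.sem, liftI_role, ih, Set.mem_setOf_eq]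
      constructor
      · rintro ⟨hd, e, he1, he2⟩
        exact ⟨hd, e.1, he1, he2⟩
      · rintro ⟨hd, e, he1, he2⟩
        exact ⟨hd, (e, 0), he1, he2⟩
  | all R C ih =>
      ext p
      simp only [Interp.sem, liftI_role, ih, Set.mem_setOf_eq]
      constructor
      · rintro ⟨hd, h⟩
        exact ⟨hd, fun e he => h (e, 0) he⟩
      · rintro ⟨hd, h⟩
        exact ⟨hd, fun e he => h e.1 he⟩

lemma hom_lift {q : CQ} {I : Interp α} {h : ℕ → α} (hh : q.Hom I h) (g : ℕ → ℕ) :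
    q.Hom (liftI I) (fun v => (h v, g v)) := by
  obtain ⟨h1, h2, h3⟩ := hh
  refine ⟨fun v hv => h1 v hv, fun p hp => ?_, fun p hp => h3 p hp⟩
  rw [liftI_sem]
  exact h2 p hp

end RFAux

/-- For every ALCI-concept `C`, abstraction level `L`, and
`ALCHI^abs[cr,rr]`-ontology `O`: `C` is `L`-satisfiable with respect to `O` if
and only if `C` is `L`-satisfiable with respect to `O` under the
repetition-free semantics. -/
theorem satisfiability_iff_repetition_free_satisfiability
    (C : Concept) (L : ℕ) (O : List Stmt) (hO : IsALCHIabsCRRR O) :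
    SatList O C L ↔ SatListRF O C L := by
  constructor
  · rintro ⟨α, I, ⟨hWf, hTree⟩, hsat, d0, hd0⟩
    obtain ⟨hW1, hW2, hW3, hW4, hW5, hW6⟩ := hWf
    refine ⟨α × ℕ, ⟨I.levels, I.prec, fun L' => liftI (I.interp L'),
      fun p L' => (I.rho p.1 L').map (disamb p.2)⟩, ⟨⟨?_, ?_, ?_, hW4, ?_, ?_⟩, hTree⟩,
      ?_, ?_, ⟨(d0, 0), by rw [liftI_sem]; exact hd0⟩⟩
    · -- nonempty domains
      intro L' hL'
      obtain ⟨d, hd⟩ := hW1 L' hL'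
      exact ⟨(d, 0), hd⟩
    · -- empty outside levels
      intro L' hL'
      have := hW2 L' hL'
      ext p
      simp [liftI, this]
    · -- disjoint domains
      intro L1 L2 hne p hp
      exact hW3 L1 L2 hne p.1 hp
    · -- rho well-formedness
      intro p L' u hu
      simp only [Option.map_eq_some_iff] at hu
      obtain ⟨t, ht, rfl⟩ := hu
      obtain ⟨htne, htdom, L'', hL''⟩ := hW5 p.1 L' t ht
      refine ⟨?_, ?_, L'', hL''.1, hL''.2⟩
      · intro h
        apply htne
        have := congrArg List.length h
        simpa using List.length_eq_zero_iff.mp (by simpa using this)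
      · intro e he
        obtain ⟨k, hk, rfl⟩ := mem_disamb he
        exact htdom _ (List.getElem_mem hk)
    · -- rho uniqueness
      intro L' p p' u u' hu hu' e heu heu'
      simp only [Option.map_eq_some_iff] at hu hu'
      obtain ⟨t, ht, rfl⟩ := hu
      obtain ⟨t', ht', rfl⟩ := hu'
      obtain ⟨k, hk, rfl⟩ := mem_disamb heu
      obtain ⟨k', hk', he'⟩ := mem_disamb heu'
      have h2 := (Prod.mk.injEq _ _ _ _).mp he' |>.2
      have hi : p.2 = p'.2 := (Nat.pair_eq_pair.mp h2).1
      have hkk : k = k' := (Nat.pair_eq_pair.mp h2).2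
      have he1 : t[k] = t'[k'] := (Prod.mk.injEq _ _ _ _).mp he' |>.1
      have hd : p.1 = p'.1 := by
        apply hW6 L' p.1 p'.1 t t' ht ht' t[k] (List.getElem_mem hk)
        rw [he1]; exact List.getElem_mem hk'
      exact Prod.ext hd hi
    · -- repetition-free
      intro p L' u hu
      simp only [Option.map_eq_some_iff] at hu
      obtain ⟨t, ht, rfl⟩ := hu
      exact disamb_nodup _ _
    · -- satisfaction of statements
      intro s hs
      have hwf := (hO s hs).1
      have hshape := (hO s hs).2
      have hold := hsat s hs
      cases s with
      | ci L' C' D' =>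
          obtain ⟨hL, hsub⟩ := hold
          refine ⟨hL, ?_⟩
          intro p hp
          rw [liftI_sem] at hp ⊢
          exact hsub hp
      | ri L' R S =>
          obtain ⟨hL, hsub⟩ := hold
          refine ⟨hL, ?_⟩
          intro p hp
          rw [liftI_role] at hp ⊢
          exact hsub hp
      | cref Lq q L' C' =>
          obtain ⟨hprec, hall⟩ := hold
          refine ⟨hprec, ?_⟩
          intro p hp
          rw [liftI_sem] at hp
          obtain ⟨t, ⟨h, hhom, rfl⟩, hrho⟩ := hall p.1 hp
          have hnd : q.ans.Nodup := hwf.2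
          refine ⟨q.ans.map (fun v => (h v, Nat.pair p.2 (q.ans.idxOf v))), ⟨_, hom_lift hhom _, rfl⟩, ?_⟩
          rw [map_eq_disamb hnd h p.2 _ (fun v _ => rfl)]
          simp [hrho]
      | rref Lq q nx L' C1 R C2 =>
          obtain ⟨hprec, hall⟩ := hold
          refine ⟨hprec, ?_⟩
          intro p1 p2 hp1 hp2 hR
          rw [liftI_sem] at hp1 hp2
          rw [liftI_role] at hR
          obtain ⟨h, hhom, hrho1, hrho2⟩ := hall p1.1 p2.1 hp1 hp2 hR
          have hnd : q.ans.Nodup := hwf.1.2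
          set l1 := q.ans.take nx with hl1
          set l2 := q.ans.drop nx with hl2
          have hnd1 : l1.Nodup := hnd.sublist (List.take_sublist nx q.ans)
          have hnd2 : l2.Nodup := hnd.sublist (List.drop_sublist nx q.ans)
          have hdisj : ∀ v ∈ l2, v ∉ l1 := by
            have : (l1 ++ l2).Nodup := by rw [hl1, hl2, List.take_append_drop]; exact hnd
            intro v hv2 hv1
            exact (List.disjoint_of_nodup_append this) hv1 hv2
          set g : ℕ → ℕ := fun v =>
            if v ∈ l1 then Nat.pair p1.2 (l1.idxOf v) else Nat.pair p2.2 (l2.idxOf v) with hg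
          refine ⟨fun v => (h v, g v), hom_lift hhom g, ?_, ?_⟩
          · have : l1.map (fun v => (h v, g v)) = disamb p1.2 (l1.map h) := by
              apply map_eq_disamb hnd1 h p1.2
              intro v hv
              simp only [hg, if_pos hv]
            rw [this]
            simp [hrho1]
          · have : l2.map (fun v => (h v, g v)) = disamb p2.2 (l2.map h) := by
              apply map_eq_disamb hnd2 h p2.2
              intro v hv
              simp only [hg, if_neg (hdisj v hv)]
            rw [this]
            simp [hrho2]
      | cabs L' C' Lq q => exact absurd hshape (by simp)
      | rabs L' R Lq q nx => exact absurd hshape (by simp)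
  · rintro ⟨α, I, hV, _, hsat, hne⟩
    exact ⟨α, I, hV, hsat, hne⟩


end DLAbs
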